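/- Let b, c, m : ℝ → ℝ be smooth, let Q : ℝ³ → ℝ be smooth, Q = Q(t,x,y), and let T, X : ℝ⁵ → ℝ be smooth, written T = T(t,x,y,p,σ), X = X(t,x,y,p,σ). Suppose that for every smooth function u : ℝ² → ℝ the identity Q(t,x,u)·F[u] = ∂ₜ[ T(t,x,u,∂ₜu,∂ₓu) ] + ∂ₓ[ X(t,x,u,∂ₜu,∂ₓu) ] holds on ℝ². Then ∂Q/∂y ≡ 0, and Q satisfies Q_tt − Q_xx − b(y)·Q_t − c(y)·Q_x + m′(y)·Q = 0 for all (t,x,y) ∈ ℝ³. (Every lowest-order conservation law multiplier of the semilinear wave equation is independent of u and is an adjoint-symmetry; the first condition is the Helmholtz-type condition on multipliers.) -/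

import Mathlib

noncomputable section

open Real

/-- Partial derivative in the first (time) variable. -/
def Dt (u : ℝ → ℝ → ℝ) : ℝ → ℝ → ℝ := fun t x => deriv (fun s => u s x) t

/-- Partial derivative in the second (space) variable. -/
def Dx (u : ℝ → ℝ → ℝ) : ℝ → ℝ → ℝ := fun t x => deriv (fun s => u t s) x

/-- Smoothness (C^∞) of a function of two real variables. -/
def Smooth2 (u : ℝ → ℝ → ℝ) : Prop := ContDiff ℝ (⊤ : ℕ∞) (fun p : ℝ × ℝ => u p.1 p.2)
/-- Partial derivative of Q(t,x,y) in its first argument. -/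
def D1 (Q : ℝ → ℝ → ℝ → ℝ) : ℝ → ℝ → ℝ → ℝ := fun t x y => deriv (fun s => Q s x y) t

/-- Partial derivative of Q(t,x,y) in its second argument. -/
def D2 (Q : ℝ → ℝ → ℝ → ℝ) : ℝ → ℝ → ℝ → ℝ := fun t x y => deriv (fun s => Q t s y) x

/-- Partial derivative of Q(t,x,y) in its third argument. -/
def D3 (Q : ℝ → ℝ → ℝ → ℝ) : ℝ → ℝ → ℝ → ℝ := fun t x y => deriv (fun s => Q t x s) y

/-- Smoothness (C^∞) of a function of three real variables. -/
def Smooth3 (Q : ℝ → ℝ → ℝ → ℝ) : Prop :=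
  ContDiff ℝ (⊤ : ℕ∞) (fun p : ℝ × ℝ × ℝ => Q p.1 p.2.1 p.2.2)
/-- The semilinear wave operator F[u] = ∂ₜ²u − ∂ₓ²u + b(u)∂ₜu + c(u)∂ₓu + m(u). -/
def Fop (b c m : ℝ → ℝ) (u : ℝ → ℝ → ℝ) : ℝ → ℝ → ℝ := fun t x =>
  Dt (Dt u) t x - Dx (Dx u) t x + b (u t x) * Dt u t x + c (u t x) * Dx u t x + m (u t x)

/-- The adjoint linearized operator along u:
L*[u]q = ∂ₜ²q − ∂ₓ²q − b(u)∂ₜq − c(u)∂ₓq + m′(u)q. -/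
def Lstar (b c m : ℝ → ℝ) (u q : ℝ → ℝ → ℝ) : ℝ → ℝ → ℝ := fun t x =>
  Dt (Dt q) t x - Dx (Dx q) t x - b (u t x) * Dt q t x - c (u t x) * Dx q t x
    + deriv m (u t x) * q t x

/-- Smoothness (C^∞) of a function of five real variables. -/
def Smooth5 (T : ℝ → ℝ → ℝ → ℝ → ℝ → ℝ) : Prop :=
  ContDiff ℝ (⊤ : ℕ∞) (fun p : ℝ × ℝ × ℝ × ℝ × ℝ => T p.1 p.2.1 p.2.2.1 p.2.2.2.1 p.2.2.2.2)


/-!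
Substituting into the identity the quadratic polynomial in `(t, x)` whose second-order jet at a
point is `(u, uₜ, uₓ, uₜₜ, uₜₓ, uₓₓ) = (y, p, σ, r, s, w)` turns it into an identity on jet space
that is affine in `(r, s, w)`. Its coefficients give `T_p = Q`, `X_σ = -Q`, `T_σ = -X_p` and
`Q (b p + c σ + m) = T_t + p T_y + X_x + σ X_y`. Differentiating the last identity twice in `σ`
leaves `0 = -2 Q_y`: by symmetry of mixed partials the other terms are derivatives of `X_{σp}`
or `X_{σσ}`, which vanish because `X_σ = -Q` depends on neither `p` nor `σ`. Its `p`-derivative, its `σ`-derivative and the identity itself, taken at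
`p = σ = 0` and differentiated in `t`, `x` and `y` respectively, combine to the adjoint equation,
since again by symmetry of mixed partials all third derivatives of `T` and `X` cancel.
-/

namespace WaveMultiplier

abbrev E3 : Type := ℝ × ℝ × ℝ
abbrev E5 : Type := ℝ × ℝ × ℝ × ℝ × ℝ

def uncurry3 (Q : ℝ → ℝ → ℝ → ℝ) : E3 → ℝ := fun ξ => Q ξ.1 ξ.2.1 ξ.2.2

def uncurry5 (T : ℝ → ℝ → ℝ → ℝ → ℝ → ℝ) : E5 → ℝ :=
  fun ξ => T ξ.1 ξ.2.1 ξ.2.2.1 ξ.2.2.2.1 ξ.2.2.2.2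

section DirDeriv

variable {E : Type*} [NormedAddCommGroup E] [NormedSpace ℝ E]

def dirDeriv (F : E → ℝ) (v : E) : E → ℝ := fun ξ => fderiv ℝ F ξ v

theorem contDiff_dirDeriv {F : E → ℝ} (hF : ContDiff ℝ (⊤ : ℕ∞) F) (v : E) :
    ContDiff ℝ (⊤ : ℕ∞) (dirDeriv F v) :=
  (hF.fderiv_right (m := (⊤ : ℕ∞)) le_rfl).clm_apply contDiff_const

theorem differentiable_dirDeriv {F : E → ℝ} (hF : ContDiff ℝ (⊤ : ℕ∞) F) (v : E) :
    Differentiable ℝ (dirDeriv F v) :=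
  (contDiff_dirDeriv hF v).differentiable (by simp)

theorem dirDeriv_comm {F : E → ℝ} (hF : ContDiff ℝ (⊤ : ℕ∞) F) (v w : E) :
    dirDeriv (dirDeriv F v) w = dirDeriv (dirDeriv F w) v := by
  funext ξ
  have hF' : Differentiable ℝ (fderiv ℝ F) :=
    (hF.fderiv_right (m := (⊤ : ℕ∞)) le_rfl).differentiable (by simp)
  have hsymm := second_derivative_symmetric
    (fun η => ((hF.differentiable (by simp)) η).hasFDerivAt) (hF' ξ).hasFDerivAt w v
  unfold dirDeriv
  rw [fderiv_clm_apply (hF' ξ) (differentiableAt_const v),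
    fderiv_clm_apply (hF' ξ) (differentiableAt_const w)]
  simpa using hsymm

theorem dirDeriv_neg (F : E → ℝ) (v : E) : dirDeriv (fun ξ => -F ξ) v = -dirDeriv F v := by
  funext ξ; simp [dirDeriv]

theorem dirDeriv_zero (v : E) : dirDeriv (0 : E → ℝ) v = 0 := by
  funext ξ; simp [dirDeriv]

theorem hasDerivAt_comp_dirDeriv {F : E → ℝ} (hF : Differentiable ℝ F) {γ : ℝ → E} {v : E}
    {s : ℝ} (hγ : HasDerivAt γ v s) : HasDerivAt (fun a => F (γ a)) (dirDeriv F v (γ s)) s :=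
  (hF (γ s)).hasFDerivAt.comp_hasDerivAt s hγ

end DirDeriv

def wt : E3 := (1, 0, 0)
def wx : E3 := (0, 1, 0)
def wy : E3 := (0, 0, 1)

def vt : E5 := (1, 0, 0, 0, 0)
def vx : E5 := (0, 1, 0, 0, 0)
def vy : E5 := (0, 0, 1, 0, 0)
def vp : E5 := (0, 0, 0, 1, 0)
def vσ : E5 := (0, 0, 0, 0, 1)

theorem fderiv_apply_eq_sum_dirDeriv (F : E5 → ℝ) (ξ v : E5) :
    fderiv ℝ F ξ v = v.1 * dirDeriv F vt ξ + v.2.1 * dirDeriv F vx ξ + v.2.2.1 * dirDeriv F vy ξ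
      + v.2.2.2.1 * dirDeriv F vp ξ + v.2.2.2.2 * dirDeriv F vσ ξ := by
  have hv : v = v.1 • vt + v.2.1 • vx + v.2.2.1 • vy + v.2.2.2.1 • vp + v.2.2.2.2 • vσ := by
    simp [vt, vx, vy, vp, vσ]
  conv_lhs => rw [hv]
  simp [dirDeriv, smul_eq_mul]

open ContinuousLinearMap in
theorem dirDeriv_comp_proj {H : E3 → ℝ} (hH : Differentiable ℝ H) (v ξ : E5) :
    dirDeriv (fun ξ : E5 => H (ξ.1, ξ.2.1, ξ.2.2.1)) v ξ
      = dirDeriv H (v.1, v.2.1, v.2.2.1) (ξ.1, ξ.2.1, ξ.2.2.1) := by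
  let proj : E5 →L[ℝ] E3 := (fst ℝ ℝ _).prod (((fst ℝ ℝ _).comp (snd ℝ ℝ _)).prod
    ((fst ℝ ℝ _).comp ((snd ℝ ℝ _).comp (snd ℝ ℝ _))))
  exact congrArg (· v) ((hH _).hasFDerivAt.comp ξ proj.hasFDerivAt).fderiv

theorem hasDerivAt_slice_t {F : E5 → ℝ} (hF : Differentiable ℝ F) (t x y p σ : ℝ) :
    HasDerivAt (fun a => F (a, x, y, p, σ)) (dirDeriv F vt (t, x, y, p, σ)) t :=
  hasDerivAt_comp_dirDeriv hF <| (hasDerivAt_id t).prodMk <| (hasDerivAt_const t x).prodMk <|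
    (hasDerivAt_const t y).prodMk <| (hasDerivAt_const t p).prodMk (hasDerivAt_const t σ)

theorem hasDerivAt_slice_x {F : E5 → ℝ} (hF : Differentiable ℝ F) (t x y p σ : ℝ) :
    HasDerivAt (fun a => F (t, a, y, p, σ)) (dirDeriv F vx (t, x, y, p, σ)) x :=
  hasDerivAt_comp_dirDeriv hF <| (hasDerivAt_const x t).prodMk <| (hasDerivAt_id x).prodMk <|
    (hasDerivAt_const x y).prodMk <| (hasDerivAt_const x p).prodMk (hasDerivAt_const x σ)

theorem hasDerivAt_slice_y {F : E5 → ℝ} (hF : Differentiable ℝ F) (t x y p σ : ℝ) :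
    HasDerivAt (fun a => F (t, x, a, p, σ)) (dirDeriv F vy (t, x, y, p, σ)) y :=
  hasDerivAt_comp_dirDeriv hF <| (hasDerivAt_const y t).prodMk <| (hasDerivAt_const y x).prodMk <|
    (hasDerivAt_id y).prodMk <| (hasDerivAt_const y p).prodMk (hasDerivAt_const y σ)

theorem hasDerivAt_slice_p {F : E5 → ℝ} (hF : Differentiable ℝ F) (t x y p σ : ℝ) :
    HasDerivAt (fun a => F (t, x, y, a, σ)) (dirDeriv F vp (t, x, y, p, σ)) p :=
  hasDerivAt_comp_dirDeriv hF <| (hasDerivAt_const p t).prodMk <| (hasDerivAt_const p x).prodMk <|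
    (hasDerivAt_const p y).prodMk <| (hasDerivAt_id p).prodMk (hasDerivAt_const p σ)

theorem hasDerivAt_slice_σ {F : E5 → ℝ} (hF : Differentiable ℝ F) (t x y p σ : ℝ) :
    HasDerivAt (fun a => F (t, x, y, p, a)) (dirDeriv F vσ (t, x, y, p, σ)) σ :=
  hasDerivAt_comp_dirDeriv hF <| (hasDerivAt_const σ t).prodMk <| (hasDerivAt_const σ x).prodMk <|
    (hasDerivAt_const σ y).prodMk <| (hasDerivAt_const σ p).prodMk (hasDerivAt_id σ)

theorem hasDerivAt_slice3_t {G : E3 → ℝ} (hG : Differentiable ℝ G) (t x y : ℝ) :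
    HasDerivAt (fun a => G (a, x, y)) (dirDeriv G wt (t, x, y)) t :=
  hasDerivAt_comp_dirDeriv hG <|
    (hasDerivAt_id t).prodMk <| (hasDerivAt_const t x).prodMk (hasDerivAt_const t y)

theorem hasDerivAt_slice3_x {G : E3 → ℝ} (hG : Differentiable ℝ G) (t x y : ℝ) :
    HasDerivAt (fun a => G (t, a, y)) (dirDeriv G wx (t, x, y)) x :=
  hasDerivAt_comp_dirDeriv hG <|
    (hasDerivAt_const x t).prodMk <| (hasDerivAt_id x).prodMk (hasDerivAt_const x y)

theorem hasDerivAt_slice3_y {G : E3 → ℝ} (hG : Differentiable ℝ G) (t x y : ℝ) :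
    HasDerivAt (fun a => G (t, x, a)) (dirDeriv G wy (t, x, y)) y :=
  hasDerivAt_comp_dirDeriv hG <|
    (hasDerivAt_const y t).prodMk <| (hasDerivAt_const y x).prodMk (hasDerivAt_id y)

theorem D1_eq_dirDeriv {G : E3 → ℝ} (hG : Differentiable ℝ G) :
    D1 (fun t x y => G (t, x, y)) = fun t x y => dirDeriv G wt (t, x, y) := by
  funext t x y; exact (hasDerivAt_slice3_t hG t x y).deriv

theorem D2_eq_dirDeriv {G : E3 → ℝ} (hG : Differentiable ℝ G) :
    D2 (fun t x y => G (t, x, y)) = fun t x y => dirDeriv G wx (t, x, y) := by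
  funext t x y; exact (hasDerivAt_slice3_x hG t x y).deriv

theorem D3_eq_dirDeriv {G : E3 → ℝ} (hG : Differentiable ℝ G) :
    D3 (fun t x y => G (t, x, y)) = fun t x y => dirDeriv G wy (t, x, y) := by
  funext t x y; exact (hasDerivAt_slice3_y hG t x y).deriv

theorem hasDerivAt_of_eq_quadratic {f : ℝ → ℝ} (K₀ K₁ K₂ a₀ : ℝ)
    (hf : ∀ a, f a = K₀ + K₁ * (a - a₀) + K₂ * (a - a₀) ^ 2 / 2) {a d : ℝ}
    (hd : d = K₁ + K₂ * (a - a₀)) : HasDerivAt f d a := by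
  have h₁ : HasDerivAt (fun a => a - a₀) 1 a := (hasDerivAt_id a).sub_const a₀
  rw [funext hf, hd]
  refine (((h₁.const_mul K₁).const_add K₀).add
    (((h₁.pow 2).const_mul K₂).div_const 2)).congr_deriv ?_
  ring

theorem Dt_comp_jet {T : ℝ → ℝ → ℝ → ℝ → ℝ → ℝ} (hT : Differentiable ℝ (uncurry5 T))
    {u : ℝ → ℝ → ℝ} {t x u₁ u₂ u₃ : ℝ} (h₁ : HasDerivAt (fun a => u a x) u₁ t)
    (h₂ : HasDerivAt (fun a => Dt u a x) u₂ t) (h₃ : HasDerivAt (fun a => Dx u a x) u₃ t) :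
    Dt (fun t x => T t x (u t x) (Dt u t x) (Dx u t x)) t x
      = fderiv ℝ (uncurry5 T) (t, x, u t x, Dt u t x, Dx u t x) (1, 0, u₁, u₂, u₃) :=
  (hasDerivAt_comp_dirDeriv hT <| (hasDerivAt_id t).prodMk <|
    (hasDerivAt_const t x).prodMk <| h₁.prodMk <| h₂.prodMk h₃).deriv

theorem Dx_comp_jet {X : ℝ → ℝ → ℝ → ℝ → ℝ → ℝ} (hX : Differentiable ℝ (uncurry5 X))
    {u : ℝ → ℝ → ℝ} {t x u₁ u₂ u₃ : ℝ} (h₁ : HasDerivAt (fun z => u t z) u₁ x)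
    (h₂ : HasDerivAt (fun z => Dt u t z) u₂ x) (h₃ : HasDerivAt (fun z => Dx u t z) u₃ x) :
    Dx (fun t x => X t x (u t x) (Dt u t x) (Dx u t x)) t x
      = fderiv ℝ (uncurry5 X) (t, x, u t x, Dt u t x, Dx u t x) (0, 1, u₁, u₂, u₃) :=
  (hasDerivAt_comp_dirDeriv hX <| (hasDerivAt_const x t).prodMk <|
    (hasDerivAt_id x).prodMk <| h₁.prodMk <| h₂.prodMk h₃).deriv

section QuadJet

variable (t x y p σ r s w : ℝ)

def quadJet : ℝ → ℝ → ℝ := fun a z =>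
  y + p * (a - t) + σ * (z - x) + r * (a - t) ^ 2 / 2 + s * (a - t) * (z - x)
    + w * (z - x) ^ 2 / 2

theorem quadJet_self : quadJet t x y p σ r s w t x = y := by
  simp [quadJet]

theorem smooth2_quadJet : Smooth2 (quadJet t x y p σ r s w) := by
  unfold Smooth2 quadJet; fun_prop

theorem Dt_quadJet :
    Dt (quadJet t x y p σ r s w) = fun a z => p + r * (a - t) + s * (z - x) := by
  funext a z
  exact (hasDerivAt_of_eq_quadratic (y + σ * (z - x) + w * (z - x) ^ 2 / 2) (p + s * (z - x)) r t
    (fun a => by simp only [quadJet]; ring) (by ring)).deriv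

theorem Dx_quadJet :
    Dx (quadJet t x y p σ r s w) = fun a z => σ + s * (a - t) + w * (z - x) := by
  funext a z
  exact (hasDerivAt_of_eq_quadratic (y + p * (a - t) + r * (a - t) ^ 2 / 2) (σ + s * (a - t)) w x
    (fun z => by simp only [quadJet]; ring) (by ring)).deriv

theorem hasDerivAt_quadJet_t : HasDerivAt (fun a => quadJet t x y p σ r s w a x) p t :=
  hasDerivAt_of_eq_quadratic y p r t (fun a => by simp only [quadJet]; ring) (by ring)

theorem hasDerivAt_quadJet_x : HasDerivAt (fun z => quadJet t x y p σ r s w t z) σ x :=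
  hasDerivAt_of_eq_quadratic y σ w x (fun z => by simp only [quadJet]; ring) (by ring)

theorem hasDerivAt_Dt_quadJet_t : HasDerivAt (fun a => Dt (quadJet t x y p σ r s w) a x) r t :=
  hasDerivAt_of_eq_quadratic p r 0 t (fun a => by rw [Dt_quadJet]; ring) (by ring)

theorem hasDerivAt_Dt_quadJet_x : HasDerivAt (fun z => Dt (quadJet t x y p σ r s w) t z) s x :=
  hasDerivAt_of_eq_quadratic p s 0 x (fun z => by rw [Dt_quadJet]; ring) (by ring)

theorem hasDerivAt_Dx_quadJet_t : HasDerivAt (fun a => Dx (quadJet t x y p σ r s w) a x) s t :=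
  hasDerivAt_of_eq_quadratic σ s 0 t (fun a => by rw [Dx_quadJet]; ring) (by ring)

theorem hasDerivAt_Dx_quadJet_x : HasDerivAt (fun z => Dx (quadJet t x y p σ r s w) t z) w x :=
  hasDerivAt_of_eq_quadratic σ w 0 x (fun z => by rw [Dx_quadJet]; ring) (by ring)

theorem Dt_quadJet_self : Dt (quadJet t x y p σ r s w) t x = p :=
  (hasDerivAt_quadJet_t ..).deriv

theorem Dx_quadJet_self : Dx (quadJet t x y p σ r s w) t x = σ :=
  (hasDerivAt_quadJet_x ..).deriv

theorem Fop_quadJet (b c m : ℝ → ℝ) :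
    Fop b c m (quadJet t x y p σ r s w) t x = r - w + b y * p + c y * σ + m y := by
  rw [Fop, quadJet_self, Dt_quadJet_self, Dx_quadJet_self, Dt,
    (hasDerivAt_Dt_quadJet_t ..).deriv, Dx, (hasDerivAt_Dx_quadJet_x ..).deriv]

theorem Dt_comp_quadJet {T : ℝ → ℝ → ℝ → ℝ → ℝ → ℝ} (hT : Differentiable ℝ (uncurry5 T)) :
    let u := quadJet t x y p σ r s w
    Dt (fun t x => T t x (u t x) (Dt u t x) (Dx u t x)) t x
      = fderiv ℝ (uncurry5 T) (t, x, y, p, σ) (1, 0, p, r, s) := by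
  intro u
  rw [Dt_comp_jet hT (hasDerivAt_quadJet_t ..) (hasDerivAt_Dt_quadJet_t ..)
    (hasDerivAt_Dx_quadJet_t ..), quadJet_self, Dt_quadJet_self, Dx_quadJet_self]

theorem Dx_comp_quadJet {X : ℝ → ℝ → ℝ → ℝ → ℝ → ℝ} (hX : Differentiable ℝ (uncurry5 X)) :
    let u := quadJet t x y p σ r s w
    Dx (fun t x => X t x (u t x) (Dt u t x) (Dx u t x)) t x
      = fderiv ℝ (uncurry5 X) (t, x, y, p, σ) (0, 1, σ, s, w) := by
  intro u
  rw [Dx_comp_jet hX (hasDerivAt_quadJet_x ..) (hasDerivAt_Dt_quadJet_x ..)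
    (hasDerivAt_Dx_quadJet_x ..), quadJet_self, Dt_quadJet_self, Dx_quadJet_self]

end QuadJet

/-- The conservation law on second-order jets: `(t, x, y, p, σ, r, s, w)` stands for
`(t, x, u, uₜ, uₓ, uₜₜ, uₜₓ, uₓₓ)`, and the two `fderiv` terms are the total derivatives
`Dₜ T` and `Dₓ X`. -/
structure JetConservationLaw (b c m : ℝ → ℝ) (Q : E3 → ℝ) (T X : E5 → ℝ) : Prop where
  contDiff_Q : ContDiff ℝ (⊤ : ℕ∞) Q
  contDiff_T : ContDiff ℝ (⊤ : ℕ∞) T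
  contDiff_X : ContDiff ℝ (⊤ : ℕ∞) X
  jet_eq : ∀ t x y p σ r s w : ℝ, Q (t, x, y) * (r - w + b y * p + c y * σ + m y)
    = fderiv ℝ T (t, x, y, p, σ) (1, 0, p, r, s) + fderiv ℝ X (t, x, y, p, σ) (0, 1, σ, s, w)

theorem JetConservationLaw.of_forall {b c m : ℝ → ℝ} {Q : ℝ → ℝ → ℝ → ℝ}
    {T X : ℝ → ℝ → ℝ → ℝ → ℝ → ℝ} (hQ : Smooth3 Q) (hT : Smooth5 T) (hX : Smooth5 X)
    (hdiv : ∀ u : ℝ → ℝ → ℝ, Smooth2 u → ∀ t x : ℝ,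
      Q t x (u t x) * Fop b c m u t x =
        Dt (fun t x => T t x (u t x) (Dt u t x) (Dx u t x)) t x
        + Dx (fun t x => X t x (u t x) (Dt u t x) (Dx u t x)) t x) :
    JetConservationLaw b c m (uncurry3 Q) (uncurry5 T) (uncurry5 X) where
  contDiff_Q := hQ
  contDiff_T := hT
  contDiff_X := hX
  jet_eq t x y p σ r s w := by
    have h := hdiv _ (smooth2_quadJet t x y p σ r s w) t x
    rwa [quadJet_self, Fop_quadJet,
      Dt_comp_quadJet t x y p σ r s w (hT.differentiable (by simp)),
      Dx_comp_quadJet t x y p σ r s w (hX.differentiable (by simp))] at h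

namespace JetConservationLaw

variable {b c m : ℝ → ℝ} {Q : E3 → ℝ} {T X : E5 → ℝ}

theorem jet_eq_sum (h : JetConservationLaw b c m Q T X) (t x y p σ r s w : ℝ) :
    Q (t, x, y) * (r - w + b y * p + c y * σ + m y)
      = dirDeriv T vt (t, x, y, p, σ) + p * dirDeriv T vy (t, x, y, p, σ)
        + r * dirDeriv T vp (t, x, y, p, σ) + s * dirDeriv T vσ (t, x, y, p, σ)
        + dirDeriv X vx (t, x, y, p, σ) + σ * dirDeriv X vy (t, x, y, p, σ)
        + s * dirDeriv X vp (t, x, y, p, σ) + w * dirDeriv X vσ (t, x, y, p, σ) := by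
  rw [h.jet_eq t x y p σ r s w, fderiv_apply_eq_sum_dirDeriv T,
    fderiv_apply_eq_sum_dirDeriv X]
  dsimp only
  ring

theorem dirDeriv_T_p (h : JetConservationLaw b c m Q T X) :
    dirDeriv T vp = fun ξ => Q (ξ.1, ξ.2.1, ξ.2.2.1) := by
  funext ⟨t, x, y, p, σ⟩
  linear_combination h.jet_eq_sum t x y p σ 0 0 0 - h.jet_eq_sum t x y p σ 1 0 0

theorem dirDeriv_X_σ (h : JetConservationLaw b c m Q T X) :
    dirDeriv X vσ = fun ξ => -Q (ξ.1, ξ.2.1, ξ.2.2.1) := by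
  funext ⟨t, x, y, p, σ⟩
  linear_combination h.jet_eq_sum t x y p σ 0 0 0 - h.jet_eq_sum t x y p σ 0 0 1

theorem dirDeriv_T_σ (h : JetConservationLaw b c m Q T X) :
    dirDeriv T vσ = fun ξ => -dirDeriv X vp ξ := by
  funext ⟨t, x, y, p, σ⟩
  linear_combination h.jet_eq_sum t x y p σ 0 0 0 - h.jet_eq_sum t x y p σ 0 1 0

theorem lower_order_eq (h : JetConservationLaw b c m Q T X) (t x y p σ : ℝ) :
    Q (t, x, y) * (b y * p + c y * σ + m y)
      = dirDeriv T vt (t, x, y, p, σ) + p * dirDeriv T vy (t, x, y, p, σ)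
        + dirDeriv X vx (t, x, y, p, σ) + σ * dirDeriv X vy (t, x, y, p, σ) := by
  linear_combination h.jet_eq_sum t x y p σ 0 0 0

theorem dirDeriv_dirDeriv_T_p (h : JetConservationLaw b c m Q T X) (v : E5) (t x y p σ : ℝ) :
    dirDeriv (dirDeriv T v) vp (t, x, y, p, σ)
      = dirDeriv Q (v.1, v.2.1, v.2.2.1) (t, x, y) := by
  rw [dirDeriv_comm h.contDiff_T, h.dirDeriv_T_p,
    dirDeriv_comp_proj (h.contDiff_Q.differentiable (by simp))]

theorem dirDeriv_dirDeriv_X_σ (h : JetConservationLaw b c m Q T X) (v : E5) (t x y p σ : ℝ) :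
    dirDeriv (dirDeriv X v) vσ (t, x, y, p, σ)
      = -dirDeriv Q (v.1, v.2.1, v.2.2.1) (t, x, y) := by
  rw [dirDeriv_comm h.contDiff_X, h.dirDeriv_X_σ, dirDeriv_neg, Pi.neg_apply,
    dirDeriv_comp_proj (h.contDiff_Q.differentiable (by simp))]

theorem dirDeriv_dirDeriv_T_σ (h : JetConservationLaw b c m Q T X) (v : E5) :
    dirDeriv (dirDeriv T v) vσ = -dirDeriv (dirDeriv X vp) v := by
  rw [dirDeriv_comm h.contDiff_T, h.dirDeriv_T_σ, dirDeriv_neg]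

theorem dirDeriv_dirDeriv_dirDeriv_X_p_σ_eq_zero (h : JetConservationLaw b c m Q T X) (v : E5) :
    dirDeriv (dirDeriv (dirDeriv X vp) v) vσ = 0 := by
  have hpσ : dirDeriv (dirDeriv X vp) vσ = 0 := by
    funext ⟨t, x, y, p, σ⟩
    rw [h.dirDeriv_dirDeriv_X_σ]
    simp [dirDeriv, vp, Prod.mk_zero_zero]
  rw [dirDeriv_comm (contDiff_dirDeriv h.contDiff_X vp), hpσ, dirDeriv_zero]

theorem q_mul_c_eq (h : JetConservationLaw b c m Q T X) (t x y p σ : ℝ) :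
    Q (t, x, y) * c y = -dirDeriv (dirDeriv X vp) vt (t, x, y, p, σ)
      - p * dirDeriv (dirDeriv X vp) vy (t, x, y, p, σ) - dirDeriv Q wx (t, x, y)
      + dirDeriv X vy (t, x, y, p, σ) - σ * dirDeriv Q wy (t, x, y) := by
  have dT := differentiable_dirDeriv h.contDiff_T
  have dX := differentiable_dirDeriv h.contDiff_X
  have hL : HasDerivAt (fun a => Q (t, x, y) * (b y * p + c y * a + m y))
      (Q (t, x, y) * c y) σ := by
    simpa using ((((hasDerivAt_id σ).const_mul (c y)).const_add (b y * p)).add_const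
      (m y)).const_mul (Q (t, x, y))
  have hR := (((hasDerivAt_slice_σ (dT vt) t x y p σ).add
    ((hasDerivAt_slice_σ (dT vy) t x y p σ).const_mul p)).add
    (hasDerivAt_slice_σ (dX vx) t x y p σ)).add
    ((hasDerivAt_id' σ).mul (hasDerivAt_slice_σ (dX vy) t x y p σ))
  have key := hL.unique (hR.congr_of_eventuallyEq (.of_forall fun a => h.lower_order_eq t x y p a))
  have hXx : dirDeriv (dirDeriv X vx) vσ (t, x, y, p, σ) = -dirDeriv Q wx (t, x, y) :=
    h.dirDeriv_dirDeriv_X_σ vx t x y p σ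
  have hXy : dirDeriv (dirDeriv X vy) vσ (t, x, y, p, σ) = -dirDeriv Q wy (t, x, y) :=
    h.dirDeriv_dirDeriv_X_σ vy t x y p σ
  rw [h.dirDeriv_dirDeriv_T_σ, h.dirDeriv_dirDeriv_T_σ, hXx, hXy] at key
  simp only [Pi.neg_apply] at key
  linarith

theorem dirDeriv_wy_eq_zero (h : JetConservationLaw b c m Q T X) (t x y : ℝ) :
    dirDeriv Q wy (t, x, y) = 0 := by
  have dX := differentiable_dirDeriv h.contDiff_X
  have dXp := differentiable_dirDeriv (contDiff_dirDeriv h.contDiff_X vp)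
  have hR := ((((hasDerivAt_slice_σ (dXp vt) t x y 0 0).neg.sub
    ((hasDerivAt_slice_σ (dXp vy) t x y 0 0).const_mul 0)).sub_const
    (dirDeriv Q wx (t, x, y))).add (hasDerivAt_slice_σ (dX vy) t x y 0 0)).sub
    ((hasDerivAt_id' 0).mul_const (dirDeriv Q wy (t, x, y)))
  have key := (hasDerivAt_const (0 : ℝ) (Q (t, x, y) * c y)).unique
    (hR.congr_of_eventuallyEq (.of_forall fun a => h.q_mul_c_eq t x y 0 a))
  have hXy : dirDeriv (dirDeriv X vy) vσ (t, x, y, 0, 0) = -dirDeriv Q wy (t, x, y) :=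
    h.dirDeriv_dirDeriv_X_σ vy t x y 0 0
  rw [h.dirDeriv_dirDeriv_dirDeriv_X_p_σ_eq_zero, h.dirDeriv_dirDeriv_dirDeriv_X_p_σ_eq_zero,
    hXy] at key
  simp only [Pi.zero_apply] at key
  linarith

theorem q_mul_b_eq (h : JetConservationLaw b c m Q T X) (t x y p σ : ℝ) :
    Q (t, x, y) * b y = dirDeriv Q wt (t, x, y) + dirDeriv T vy (t, x, y, p, σ)
      + dirDeriv (dirDeriv X vp) vx (t, x, y, p, σ)
      + σ * dirDeriv (dirDeriv X vp) vy (t, x, y, p, σ) := by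
  have dT := differentiable_dirDeriv h.contDiff_T
  have dX := differentiable_dirDeriv h.contDiff_X
  have hL : HasDerivAt (fun a => Q (t, x, y) * (b y * a + c y * σ + m y))
      (Q (t, x, y) * b y) p := by
    simpa using ((((hasDerivAt_id p).const_mul (b y)).add_const (c y * σ)).add_const
      (m y)).const_mul (Q (t, x, y))
  have hR := (((hasDerivAt_slice_p (dT vt) t x y p σ).add
    ((hasDerivAt_id' p).mul (hasDerivAt_slice_p (dT vy) t x y p σ))).add
    (hasDerivAt_slice_p (dX vx) t x y p σ)).add
    ((hasDerivAt_slice_p (dX vy) t x y p σ).const_mul σ)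
  have key := hL.unique (hR.congr_of_eventuallyEq (.of_forall fun a => h.lower_order_eq t x y a σ))
  have hTt : dirDeriv (dirDeriv T vt) vp (t, x, y, p, σ) = dirDeriv Q wt (t, x, y) :=
    h.dirDeriv_dirDeriv_T_p vt t x y p σ
  have hTy : dirDeriv (dirDeriv T vy) vp (t, x, y, p, σ) = 0 :=
    (h.dirDeriv_dirDeriv_T_p vy t x y p σ).trans (h.dirDeriv_wy_eq_zero t x y)
  rw [hTt, hTy, dirDeriv_comm h.contDiff_X vx, dirDeriv_comm h.contDiff_X vy] at key
  linarith

theorem q_t_mul_b_eq (h : JetConservationLaw b c m Q T X) (t x y : ℝ) :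
    dirDeriv Q wt (t, x, y) * b y = dirDeriv (dirDeriv Q wt) wt (t, x, y)
      + dirDeriv (dirDeriv T vy) vt (t, x, y, 0, 0)
      + dirDeriv (dirDeriv (dirDeriv X vp) vx) vt (t, x, y, 0, 0) := by
  have dQ := h.contDiff_Q.differentiable (by simp)
  have dQt := differentiable_dirDeriv h.contDiff_Q wt
  have dTy := differentiable_dirDeriv h.contDiff_T vy
  have dXpx := differentiable_dirDeriv (contDiff_dirDeriv h.contDiff_X vp) vx
  have hR := ((hasDerivAt_slice3_t dQt t x y).add (hasDerivAt_slice_t dTy t x y 0 0)).add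
    (hasDerivAt_slice_t dXpx t x y 0 0)
  exact ((hasDerivAt_slice3_t dQ t x y).mul_const (b y)).unique
    (hR.congr_of_eventuallyEq (.of_forall fun a => by simpa using h.q_mul_b_eq a x y 0 0))

theorem q_x_mul_c_eq (h : JetConservationLaw b c m Q T X) (t x y : ℝ) :
    dirDeriv Q wx (t, x, y) * c y = -dirDeriv (dirDeriv (dirDeriv X vp) vt) vx (t, x, y, 0, 0)
      - dirDeriv (dirDeriv Q wx) wx (t, x, y) + dirDeriv (dirDeriv X vy) vx (t, x, y, 0, 0) := by
  have dQ := h.contDiff_Q.differentiable (by simp)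
  have dQx := differentiable_dirDeriv h.contDiff_Q wx
  have dXy := differentiable_dirDeriv h.contDiff_X vy
  have dXpt := differentiable_dirDeriv (contDiff_dirDeriv h.contDiff_X vp) vt
  have hR := ((hasDerivAt_slice_x dXpt t x y 0 0).neg.sub (hasDerivAt_slice3_x dQx t x y)).add
    (hasDerivAt_slice_x dXy t x y 0 0)
  exact ((hasDerivAt_slice3_x dQ t x y).mul_const (c y)).unique
    (hR.congr_of_eventuallyEq (.of_forall fun a => by simpa using h.q_mul_c_eq t a y 0 0))

theorem q_mul_deriv_m_eq (h : JetConservationLaw b c m Q T X) {t x y : ℝ}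
    (hm : DifferentiableAt ℝ m y) :
    Q (t, x, y) * deriv m y = dirDeriv (dirDeriv T vt) vy (t, x, y, 0, 0)
      + dirDeriv (dirDeriv X vx) vy (t, x, y, 0, 0) := by
  have dQ := h.contDiff_Q.differentiable (by simp)
  have dTt := differentiable_dirDeriv h.contDiff_T vt
  have dXx := differentiable_dirDeriv h.contDiff_X vx
  have hR := (hasDerivAt_slice_y dTt t x y 0 0).add (hasDerivAt_slice_y dXx t x y 0 0)
  have key := ((hasDerivAt_slice3_y dQ t x y).mul hm.hasDerivAt).unique
    (hR.congr_of_eventuallyEq (.of_forall fun a => by simpa using h.lower_order_eq t x a 0 0))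
  rwa [h.dirDeriv_wy_eq_zero, zero_mul, zero_add] at key

theorem adjoint_eq_zero (h : JetConservationLaw b c m Q T X) {t x y : ℝ}
    (hm : DifferentiableAt ℝ m y) :
    dirDeriv (dirDeriv Q wt) wt (t, x, y) - dirDeriv (dirDeriv Q wx) wx (t, x, y)
      - b y * dirDeriv Q wt (t, x, y) - c y * dirDeriv Q wx (t, x, y) + deriv m y * Q (t, x, y)
      = 0 := by
  have hb := h.q_t_mul_b_eq t x y
  have hc := h.q_x_mul_c_eq t x y
  have hm := h.q_mul_deriv_m_eq (t := t) (x := x) hm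
  rw [dirDeriv_comm h.contDiff_T vy, dirDeriv_comm (contDiff_dirDeriv h.contDiff_X vp) vx] at hb
  rw [dirDeriv_comm h.contDiff_X vy] at hc
  linarith

end JetConservationLaw

end WaveMultiplier

open WaveMultiplier

theorem stmt_17_general
    (b c m : ℝ → ℝ)
    (hm : ContDiff ℝ (⊤ : ℕ∞) m)
    (Q : ℝ → ℝ → ℝ → ℝ) (hQ : Smooth3 Q)
    (T X : ℝ → ℝ → ℝ → ℝ → ℝ → ℝ) (hT : Smooth5 T) (hX : Smooth5 X)
    (hdiv : ∀ u : ℝ → ℝ → ℝ, Smooth2 u →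
      ∀ t x : ℝ,
        Q t x (u t x) * Fop b c m u t x =
          Dt (fun t x => T t x (u t x) (Dt u t x) (Dx u t x)) t x
          + Dx (fun t x => X t x (u t x) (Dt u t x) (Dx u t x)) t x) :
    (∀ t x y : ℝ, D3 Q t x y = 0)
    ∧ (∀ t x y : ℝ,
        D1 (D1 Q) t x y - D2 (D2 Q) t x y - b y * D1 Q t x y - c y * D2 Q t x y
          + deriv m y * Q t x y = 0) := by
  have h := JetConservationLaw.of_forall hQ hT hX hdiv
  have dQ := h.contDiff_Q.differentiable (by simp)
  have hD1 : D1 Q = fun t x y => dirDeriv (uncurry3 Q) wt (t, x, y) := D1_eq_dirDeriv dQ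
  have hD2 : D2 Q = fun t x y => dirDeriv (uncurry3 Q) wx (t, x, y) := D2_eq_dirDeriv dQ
  have hD3 : D3 Q = fun t x y => dirDeriv (uncurry3 Q) wy (t, x, y) := D3_eq_dirDeriv dQ
  refine ⟨fun t x y => ?_, fun t x y => ?_⟩
  · rw [hD3]
    exact h.dirDeriv_wy_eq_zero t x y
  · rw [hD1, hD2, D1_eq_dirDeriv (differentiable_dirDeriv h.contDiff_Q wt),
      D2_eq_dirDeriv (differentiable_dirDeriv h.contDiff_Q wx)]
    exact h.adjoint_eq_zero (hm.differentiable (by simp) y)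

/-- Every lowest-order conservation law multiplier Q(t,x,u) of the semilinear
wave equation is independent of u (Helmholtz-type condition) and is an
adjoint-symmetry. -/
theorem stmt_17
    (b c m : ℝ → ℝ)
    (hb : ContDiff ℝ (⊤ : ℕ∞) b) (hc : ContDiff ℝ (⊤ : ℕ∞) c) (hm : ContDiff ℝ (⊤ : ℕ∞) m)
    (Q : ℝ → ℝ → ℝ → ℝ) (hQ : Smooth3 Q)
    (T X : ℝ → ℝ → ℝ → ℝ → ℝ → ℝ) (hT : Smooth5 T) (hX : Smooth5 X)
    (hdiv : ∀ u : ℝ → ℝ → ℝ, Smooth2 u →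
      ∀ t x : ℝ,
        Q t x (u t x) * Fop b c m u t x =
          Dt (fun t x => T t x (u t x) (Dt u t x) (Dx u t x)) t x
          + Dx (fun t x => X t x (u t x) (Dt u t x) (Dx u t x)) t x) :
    (∀ t x y : ℝ, D3 Q t x y = 0)
    ∧ (∀ t x y : ℝ,
        D1 (D1 Q) t x y - D2 (D2 Q) t x y - b y * D1 Q t x y - c y * D2 Q t x y
          + deriv m y * Q t x y = 0) :=
  stmt_17_general b c m hm Q hQ T X hT hX hdiv
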